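/- arXiv:0710.3746 — 7 statements merged into one kernel-verified Lean document; each statement's English description precedes it below -/
import Mathlib

section
/- Let A be an m×n matrix of rank m (m ≤ n) with entries in F[x], where F is a field, and let d(x) be the greatest common divisor of all m×m minors of A. Then A admits a factorization A = L·U with L an m×m matrix over F[x] satisfying det L = d(x) (up to a unit), and U an m×n matrix over F[x]. -/
/-!
Over the principal ideal domain `F[x]` the column space of `A` is free, of rank `m`; a basis of
it factors `A = L * U` with `U` surjective, so `U * V = 1` for some `V`. Every maximal minor of
`L * U` is `det L` times a minor of `U`, so `det L ∣ d`. Conversely `L = A * V`, and expanding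
`det (A * V)` multilinearly in the columns of `A` (Cauchy–Binet) shows `d ∣ det L`.
-/

open Matrix

theorem AlternatingMap.dvd_map_sum_smul {R M ι κ : Type*} [CommSemiring R] [AddCommMonoid M]
    [Module R M] [Fintype ι] [DecidableEq ι] [Fintype κ] (f : M [⋀^ι]→ₗ[R] R) (v : κ → M)
    (c : ι → κ → R) {d : R} (hd : ∀ g : ι → κ, Function.Injective g → d ∣ f (v ∘ g)) :
    d ∣ f fun i => ∑ k, c i k • v k := by
  rw [← f.coe_multilinearMap, MultilinearMap.map_sum]
  refine Finset.dvd_sum fun g _ => ?_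
  have h := f.toMultilinearMap.map_smul_univ (fun i => c i (g i)) (v ∘ g)
  simp only [Function.comp_apply] at h
  rw [h, f.coe_multilinearMap, smul_eq_mul]
  by_cases hg : Function.Injective g
  · exact (hd g hg).mul_left _
  · simp [f.map_eq_zero_of_not_injective _ fun h => hg h.of_comp]

theorem Matrix.dvd_det_mul_of_dvd_det_submatrix {R m n : Type*} [CommRing R] [Fintype m]
    [DecidableEq m] [Fintype n] (A : Matrix m n R) (V : Matrix n m R) {d : R}
    (hd : ∀ g : m → n, Function.Injective g → d ∣ (A.submatrix id g).det) :
    d ∣ (A * V).det := by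
  have hrows : (A * V)ᵀ = fun j => ∑ k, V k j • Aᵀ k := by
    ext j i
    simp only [transpose_apply, mul_apply, Finset.sum_apply, Pi.smul_apply, smul_eq_mul, mul_comm]
  rw [← det_transpose, hrows]
  refine detRowAlternating.dvd_map_sum_smul _ _ fun g hg => ?_
  convert hd g hg using 1
  rw [← det_transpose]
  rfl

theorem Matrix.det_dvd_det_submatrix_mul {R m n : Type*} [CommRing R] [Fintype m]
    [DecidableEq m] (L : Matrix m m R) (U : Matrix m n R) (g : m → n) :
    L.det ∣ ((L * U).submatrix id g).det := by
  rw [submatrix_mul _ _ _ id _ Function.bijective_id, submatrix_id_id, det_mul]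
  exact dvd_mul_right _ _

theorem Matrix.exists_eq_mul_mulVec_surjective_of_rank_eq {R m n : Type*} [CommRing R]
    [IsDomain R] [IsPrincipalIdealRing R] [Fintype m] [DecidableEq m] [Fintype n]
    [DecidableEq n] (A : Matrix m n R) (hA : A.rank = Fintype.card m) :
    ∃ (L : Matrix m m R) (U : Matrix m n R), A = L * U ∧ Function.Surjective U.mulVec := by
  let N := LinearMap.range A.mulVecLin
  let e : N ≃ₗ[R] m → R :=
    ((Module.finBasisOfFinrankEq R N hA).reindex (Fintype.equivFin m).symm).equivFun
  let U := LinearMap.toMatrix' (e.toLinearMap ∘ₗ A.mulVecLin.rangeRestrict)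
  refine ⟨LinearMap.toMatrix' (N.subtype ∘ₗ e.symm.toLinearMap), U, ?_, fun y => ?_⟩
  · have hfactor : (N.subtype ∘ₗ e.symm.toLinearMap) ∘ₗ e.toLinearMap ∘ₗ
        A.mulVecLin.rangeRestrict = A.mulVecLin := by
      ext; simp
    rw [← LinearMap.toMatrix'_comp, hfactor, ← Matrix.toLin'_apply', LinearMap.toMatrix'_toLin']
  · obtain ⟨x, hx⟩ := A.mulVecLin.surjective_rangeRestrict (e.symm y)
    exact ⟨x, by simp [U, LinearMap.toMatrix'_mulVec, hx]⟩

theorem stmt_2_general (F : Type*) [Field F] (m n : ℕ)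
    (A : Matrix (Fin m) (Fin n) (Polynomial F))
    (hrank : A.rank = m)
    (d : Polynomial F)
    (hdvd : ∀ g : Fin m → Fin n, Function.Injective g →
      d ∣ (A.submatrix id g).det)
    (hgcd : ∀ e : Polynomial F,
      (∀ g : Fin m → Fin n, Function.Injective g → e ∣ (A.submatrix id g).det)
      → e ∣ d) :
    ∃ (L : Matrix (Fin m) (Fin m) (Polynomial F))
      (U : Matrix (Fin m) (Fin n) (Polynomial F)),
      A = L * U ∧ Associated L.det d := by
  obtain ⟨L, U, rfl, hU⟩ :=
    A.exists_eq_mul_mulVec_surjective_of_rank_eq (hrank.trans (Fintype.card_fin m).symm)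
  obtain ⟨V, hUV⟩ := mulVec_surjective_iff_exists_right_inverse.1 hU
  have hLd : L.det ∣ d := hgcd _ fun g _ => L.det_dvd_det_submatrix_mul U g
  have hdL : d ∣ L.det := by
    simpa [Matrix.mul_assoc, hUV] using (L * U).dvd_det_mul_of_dvd_det_submatrix V hdvd
  exact ⟨L, U, rfl, associated_of_dvd_dvd hLd hdL⟩

/-- an m×n matrix of rank m over F[x] factors as L·U with
det L associated to the gcd d of the m×m minors. -/
theorem stmt_2 (F : Type*) [Field F] (m n : ℕ) (hmn : m ≤ n)
    (A : Matrix (Fin m) (Fin n) (Polynomial F))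
    (hrank : A.rank = m)
    (d : Polynomial F)
    (hdvd : ∀ g : Fin m → Fin n, Function.Injective g →
      d ∣ (A.submatrix id g).det)
    (hgcd : ∀ e : Polynomial F,
      (∀ g : Fin m → Fin n, Function.Injective g → e ∣ (A.submatrix id g).det)
      → e ∣ d) :
    ∃ (L : Matrix (Fin m) (Fin m) (Polynomial F))
      (U : Matrix (Fin m) (Fin n) (Polynomial F)),
      A = L * U ∧ Associated L.det d :=
  stmt_2_general F m n A hrank d hdvd hgcd
end

section
/- Let D be a principal ideal domain and let C be an m×n matrix over D[x] of rank m with m ≤ n. If C is minor left prime (the gcd of all its m×m minors is a unit), then in every factorization C = C₁C₂ with C₁ an m×m matrix over D[x] and C₂ an m×n matrix over D[x], the matrix C₁ is invertible over D[x]. -/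
/-- over D[x] (D a PID), a minor left prime matrix of full row
rank is factor left prime: in any factorization C = C₁C₂ with C₁ square,
C₁ is invertible. -/
theorem stmt_3 (D : Type*) [CommRing D] [IsDomain D] [IsPrincipalIdealRing D]
    (m n : ℕ) (hmn : m ≤ n)
    (C : Matrix (Fin m) (Fin n) (Polynomial D))
    (hrank : C.rank = m)
    (hMLP : ∀ d : Polynomial D,
      (∀ g : Fin m → Fin n, Function.Injective g → d ∣ (C.submatrix id g).det)
      → IsUnit d)
    (C₁ : Matrix (Fin m) (Fin m) (Polynomial D))
    (C₂ : Matrix (Fin m) (Fin n) (Polynomial D))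
    (hfac : C = C₁ * C₂) :
    IsUnit C₁.det := by
  apply hMLP
  intro g hg
  have : C.submatrix id g = C₁ * C₂.submatrix id g := by
    ext i j
    simp [hfac, Matrix.mul_apply]
  rw [this, Matrix.det_mul]
  exact dvd_mul_right _ _
end

section
/- Let D be a PID and C an m×n matrix over D[x] of rank m (m ≤ n). If there exist n×m matrices Z₀, ..., Z_s over D[x] and elements d₀, ..., d_s ∈ D with C·Z_j = d_j·I_m for each j and gcd(d₀, ..., d_s) = 1, then C is minor left prime. -/
/-!
Expanding `det (C * Z_j) = d_j ^ m` by Cauchy–Binet shows that any common divisor `δ` of the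
maximal minors of `C` divides the constants `d_j ^ m`. Some `d_j` is nonzero, so `δ` is a
constant `c ∈ D`; every prime factor of `c` would divide all the `d_j`, hence `c` is a unit.
-/

open Polynomial

namespace Matrix

variable {m n R : Type*} [Fintype m] [DecidableEq m] [CommRing R]

theorem det_submatrix_id_eq_zero_of_not_injective {A : Matrix m n R} {g : m → n}
    (hg : ¬Function.Injective g) : (A.submatrix id g).det = 0 := by
  obtain ⟨a, b, hab, hne⟩ := Function.not_injective_iff.mp hg
  exact det_zero_of_column_eq hne fun k => by simp [hab]

variable [Fintype n]

/-- Cauchy–Binet, summing over all (not necessarily injective) choices of columns. -/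
theorem det_mul_eq_sum_prod_mul_det_submatrix (A : Matrix m n R) (B : Matrix n m R) :
    (A * B).det = ∑ g : m → n, (∏ k, B (g k) k) * (A.submatrix id g).det := by
  have hrows : (A * B)ᵀ = fun k => ∑ j, B j k • Aᵀ j := by
    ext k i
    simp [Matrix.mul_apply, Finset.sum_apply, mul_comm]
  rw [← det_transpose, hrows]
  have hmulti := (detRowAlternating (R := R) (n := m)).toMultilinearMap.map_sum
    (fun k j => B j k • Aᵀ j)
  simp only [AlternatingMap.coe_multilinearMap, MultilinearMap.map_smul_univ] at hmulti
  refine hmulti.trans (Finset.sum_congr rfl fun g _ => ?_)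
  rw [smul_eq_mul, ← det_transpose (A.submatrix id g)]
  rfl

theorem dvd_det_mul_of_dvd_det_submatrix_s4 {A : Matrix m n R} {δ : R}
    (hδ : ∀ g : m → n, Function.Injective g → δ ∣ (A.submatrix id g).det) (B : Matrix n m R) :
    δ ∣ (A * B).det := by
  rw [det_mul_eq_sum_prod_mul_det_submatrix]
  refine Finset.dvd_sum fun g _ => ?_
  by_cases hg : Function.Injective g
  · exact (hδ g hg).mul_left _
  · simp [det_submatrix_id_eq_zero_of_not_injective hg]

end Matrix

theorem Polynomial.exists_eq_C_of_dvd_C {R : Type*} [CommSemiring R] [NoZeroDivisors R]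
    {p : R[X]} {a : R} (ha : a ≠ 0) (hp : p ∣ C a) : ∃ b, p = C b :=
  ⟨_, eq_C_of_natDegree_eq_zero (by simpa using natDegree_le_of_dvd hp (C_ne_zero.mpr ha))⟩

theorem isUnit_of_forall_dvd_pow {α ι : Type*} [CommMonoidWithZero α]
    [UniqueFactorizationMonoid α] {d : ι → α} (hd : ∀ e, (∀ j, e ∣ d j) → IsUnit e) {c : α}
    {k : ℕ} (hc : ∀ j, c ∣ d j ^ k) : IsUnit c := by
  rcases eq_or_ne c 0 with rfl | hc0
  · exact hd 0 fun j => zero_dvd_iff.mpr (eq_zero_of_pow_eq_zero (zero_dvd_iff.mp (hc j)))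
  by_contra hcu
  obtain ⟨p, hp, hpc⟩ := WfDvdMonoid.exists_irreducible_factor hcu hc0
  exact hp.not_isUnit (hd p fun j => hp.prime.dvd_of_dvd_pow (hpc.trans (hc j)))

theorem stmt_4_general (D : Type*) [CommRing D] [IsDomain D] [IsPrincipalIdealRing D]
    (m n : ℕ)
    (C : Matrix (Fin m) (Fin n) (Polynomial D))
    (s : ℕ)
    (Z : Fin (s + 1) → Matrix (Fin n) (Fin m) (Polynomial D))
    (d : Fin (s + 1) → D)
    (hZ : ∀ j, C * Z j = Polynomial.C (d j) • (1 : Matrix (Fin m) (Fin m) (Polynomial D)))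
    (hgcd : ∀ e : D, (∀ j, e ∣ d j) → IsUnit e) :
    ∀ δ : Polynomial D,
      (∀ g : Fin m → Fin n, Function.Injective g → δ ∣ (C.submatrix id g).det)
      → IsUnit δ := by
  intro δ hδ
  have hdvd : ∀ j, δ ∣ Polynomial.C (d j ^ m) := fun j => by
    simpa [hZ j, Matrix.det_smul] using Matrix.dvd_det_mul_of_dvd_det_submatrix_s4 hδ (Z j)
  obtain ⟨j₀, hj₀⟩ : ∃ j, d j ≠ 0 := by
    by_contra! h
    exact not_isUnit_zero (hgcd 0 fun j => by simp [h j])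
  obtain ⟨c, rfl⟩ := exists_eq_C_of_dvd_C (pow_ne_zero m hj₀) (hdvd j₀)
  exact isUnit_C.mpr <| isUnit_of_forall_dvd_pow (k := m) hgcd fun j => by
    simpa only [coeff_C_zero] using (C_dvd_iff_dvd_coeff _ _).mp (hdvd j) 0

/-- if C·Z_j = d_j·I with d_j ∈ D and gcd(d₀,…,d_s) = 1,
then C is minor left prime. -/
theorem stmt_4 (D : Type*) [CommRing D] [IsDomain D] [IsPrincipalIdealRing D]
    (m n : ℕ) (hmn : m ≤ n)
    (C : Matrix (Fin m) (Fin n) (Polynomial D))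
    (hrank : C.rank = m)
    (s : ℕ)
    (Z : Fin (s + 1) → Matrix (Fin n) (Fin m) (Polynomial D))
    (d : Fin (s + 1) → D)
    (hZ : ∀ j, C * Z j = Polynomial.C (d j) • (1 : Matrix (Fin m) (Fin m) (Polynomial D)))
    (hgcd : ∀ e : D, (∀ j, e ∣ d j) → IsUnit e) :
    ∀ δ : Polynomial D,
      (∀ g : Fin m → Fin n, Function.Injective g → δ ∣ (C.submatrix id g).det)
      → IsUnit δ :=
  stmt_4_general D m n C s Z d hZ hgcd
end

section
/- Let D be a PID and suppose A₁₁ (r×r, nonsingular), A₁₂ (r×k), A₂₁ (p×r) are matrices over D[x] such that A₂₁·A₁₁⁻¹·A₁₂, computed over the fraction field, has all entries in D[x]. If the block matrix (A₁₁ A₁₂) is minor left prime, then A₂₁·A₁₁⁻¹ has all entries in D[x]. -/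
/-!
With `X = A₂₁ A₁₁⁻¹` and `A₂₁ A₁₁⁻¹ A₁₂ = M` polynomial, `X (A₁₁ A₁₂) = (A₂₁ M)`. Restricting to any
`r` columns `C` of `(A₁₁ A₁₂)` and multiplying by `adj C` gives `det C • X = N adj C`, a polynomial
matrix. Write an entry of `X` as a reduced fraction over the UFD `D[x]`: its denominator divides
every maximal minor `det C`, so minor left primeness makes it a unit.
-/

open Matrix IsLocalization

theorem IsFractionRing.isInteger_of_forall_isInteger_mul {R K ι : Type*} [CommRing R] [IsDomain R]
    [UniqueFactorizationMonoid R] [Field K] [Algebra R K] [IsFractionRing R K]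
    (d : ι → R) (hd : ∀ c : R, (∀ i, c ∣ d i) → IsUnit c) {x : K}
    (hx : ∀ i, IsInteger R (algebraMap R K (d i) * x)) : IsInteger R x := by
  refine IsFractionRing.isInteger_of_isUnit_den (hd _ fun i => ?_)
  obtain ⟨y, hy⟩ := hx i
  have hden : algebraMap R K (IsFractionRing.den R x) ≠ 0 :=
    IsFractionRing.to_map_ne_zero_of_mem_nonZeroDivisors (IsFractionRing.den R x).2
  have hmul : d i * IsFractionRing.num R x = y * IsFractionRing.den R x := by
    apply IsFractionRing.injective R K
    rw [← IsFractionRing.mk'_num_den' R x] at hy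
    rw [map_mul, map_mul, hy]
    field_simp
  exact (IsFractionRing.num_den_reduced R x).symm.dvd_of_dvd_mul_right ⟨y, by rw [hmul, mul_comm]⟩

theorem Matrix.map_det_smul_eq_of_mul_map_eq {R S m n : Type*} [CommRing R] [CommRing S]
    [Fintype n] [DecidableEq n] (f : R →+* S) {X : Matrix m n S} {C : Matrix n n R}
    {N : Matrix m n R} (h : X * C.map f = N.map f) : f C.det • X = (N * C.adjugate).map f := by
  have hdet : (C.map f).det = f C.det := (RingHom.map_det f C).symm
  calc f C.det • X = X * (C.map f * (C.map f).adjugate) := by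
        rw [mul_adjugate, hdet, Matrix.mul_smul, Matrix.mul_one]
    _ = N.map f * (C.map f).adjugate := by rw [← Matrix.mul_assoc, h]
    _ = (N * C.adjugate).map f := by
        rw [Matrix.map_mul, ← RingHom.mapMatrix_apply, ← RingHom.map_adjugate]; rfl

def Matrix.IsMinorLeftPrime {R ι : Type*} [CommRing R] {r : ℕ} (A : Matrix (Fin r) ι R) : Prop :=
  ∀ d : R, (∀ g : Fin r → ι, Function.Injective g → d ∣ (A.submatrix id g).det) → IsUnit d

theorem Matrix.IsMinorLeftPrime.exists_map_eq_of_mul_map_eq {R K m ι : Type*} [CommRing R]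
    [IsDomain R] [UniqueFactorizationMonoid R] [Field K] [Algebra R K] [IsFractionRing R K]
    {r : ℕ} {A : Matrix (Fin r) ι R} (hA : A.IsMinorLeftPrime) {X : Matrix m (Fin r) K}
    {B : Matrix m ι R} (h : X * A.map (algebraMap R K) = B.map (algebraMap R K)) :
    ∃ M : Matrix m (Fin r) R, X = M.map (algebraMap R K) := by
  have hminor (g : Fin r → ι) : algebraMap R K (A.submatrix id g).det • X =
      (B.submatrix id g * (A.submatrix id g).adjugate).map (algebraMap R K) :=
    map_det_smul_eq_of_mul_map_eq _ (congrArg (·.submatrix id g) h)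
  have hint (i : m) (j : Fin r) : IsInteger R (X i j) :=
    IsFractionRing.isInteger_of_forall_isInteger_mul
      (fun g : {g : Fin r → ι // Function.Injective g} => (A.submatrix id g).det)
      (fun c hc => hA c fun g hg => hc ⟨g, hg⟩)
      fun g => ⟨_, (congrFun₂ (hminor g) i j).symm⟩
  choose M hM using hint
  exact ⟨Matrix.of M, by ext i j; exact (hM i j).symm⟩

/-- if (A₁₁ A₁₂) is minor left prime and A₂₁·A₁₁⁻¹·A₁₂ is
polynomial, then A₂₁·A₁₁⁻¹ is polynomial. Computations take place over
the fraction field of D[x]. -/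
theorem stmt_6 (D : Type*) [CommRing D] [IsDomain D] [IsPrincipalIdealRing D]
    (r k p : ℕ)
    (A11 : Matrix (Fin r) (Fin r) (Polynomial D))
    (A12 : Matrix (Fin r) (Fin k) (Polynomial D))
    (A21 : Matrix (Fin p) (Fin r) (Polynomial D))
    (hns : A11.det ≠ 0)
    (hMLP : ∀ d : Polynomial D,
      (∀ g : Fin r → Fin r ⊕ Fin k, Function.Injective g →
        d ∣ ((Matrix.fromCols A11 A12).submatrix id g).det)
      → IsUnit d)
    (hent : ∃ M : Matrix (Fin p) (Fin k) (Polynomial D),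
      A21.map (algebraMap (Polynomial D) (FractionRing (Polynomial D))) *
        (A11.map (algebraMap (Polynomial D) (FractionRing (Polynomial D))))⁻¹ *
        A12.map (algebraMap (Polynomial D) (FractionRing (Polynomial D))) =
      M.map (algebraMap (Polynomial D) (FractionRing (Polynomial D)))) :
    ∃ M : Matrix (Fin p) (Fin r) (Polynomial D),
      A21.map (algebraMap (Polynomial D) (FractionRing (Polynomial D))) *
        (A11.map (algebraMap (Polynomial D) (FractionRing (Polynomial D))))⁻¹ =
      M.map (algebraMap (Polynomial D) (FractionRing (Polynomial D))) := by
  set φ := algebraMap (Polynomial D) (FractionRing (Polynomial D))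
  obtain ⟨M, hM⟩ := hent
  have hdet : IsUnit (A11.map φ).det := by
    rw [← RingHom.mapMatrix_apply, ← RingHom.map_det]
    exact (map_ne_zero_iff φ (IsFractionRing.injective _ _)).mpr hns |>.isUnit
  have hXA : A21.map φ * (A11.map φ)⁻¹ * A11.map φ = A21.map φ := by
    rw [Matrix.mul_assoc, nonsing_inv_mul _ hdet, Matrix.mul_one]
  refine IsMinorLeftPrime.exists_map_eq_of_mul_map_eq (B := fromCols A21 M) hMLP ?_
  rw [fromCols_map, mul_fromCols, fromCols_map, hXA, hM]
end

section
/- Every non-nilpotent square matrix A over a field F is algebraically strong shift equivalent over F to a nonsingular (invertible) matrix. -/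
/-
If `A` is singular, a rank factorisation `A = U * V` through `F ^ r` with `r = rank A < n` is an
elementary strong shift equivalence from `A` to the smaller matrix `V * U`, which is still not
nilpotent because `(U * V) ^ (k + 1) = U * (V * U) ^ k * V`. Strong induction on the size ends at
a nonsingular matrix.
-/

/-- Elementary strong shift equivalence. -/
def ElemSSE (R : Type*) [CommRing R]
    (A B : Σ n : ℕ, Matrix (Fin n) (Fin n) R) : Prop :=
  ∃ (U : Matrix (Fin A.1) (Fin B.1) R) (V : Matrix (Fin B.1) (Fin A.1) R),
    A.2 = U * V ∧ B.2 = V * U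

/-- Algebraic strong shift equivalence of lag `l`. -/
def AlgSSE (R : Type*) [CommRing R] (l : ℕ)
    (A B : Σ n : ℕ, Matrix (Fin n) (Fin n) R) : Prop :=
  ∃ f : ℕ → Σ n : ℕ, Matrix (Fin n) (Fin n) R,
    f 0 = A ∧ f l = B ∧ ∀ i < l, ElemSSE R (f i) (f (i + 1))

theorem AlgSSE.refl (R : Type*) [CommRing R] (A : Σ n : ℕ, Matrix (Fin n) (Fin n) R) :
    AlgSSE R 0 A A :=
  ⟨fun _ ↦ A, rfl, rfl, fun _ hi ↦ absurd hi (Nat.not_lt_zero _)⟩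

theorem AlgSSE.cons {R : Type*} [CommRing R] {l : ℕ} {A B C : Σ n : ℕ, Matrix (Fin n) (Fin n) R}
    (hAB : ElemSSE R A B) (hBC : AlgSSE R l B C) : AlgSSE R (l + 1) A C := by
  obtain ⟨f, hf0, hfl, hstep⟩ := hBC
  refine ⟨fun | 0 => A | i + 1 => f i, rfl, hfl, ?_⟩
  rintro (_ | i) hi
  · simpa [hf0] using hAB
  · exact hstep i (by omega)

namespace Matrix

section Semiring

variable {R : Type*} [Semiring R] {m p : Type*} [Fintype m] [DecidableEq m] [Fintype p]
  [DecidableEq p]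

theorem mul_pow_succ (U : Matrix m p R) (V : Matrix p m R) (k : ℕ) :
    (U * V) ^ (k + 1) = U * (V * U) ^ k * V := by
  induction k with
  | zero => simp
  | succ k ih => rw [pow_succ, ih, pow_succ]; simp only [Matrix.mul_assoc]

theorem isNilpotent_mul_of_isNilpotent_mul_swap {U : Matrix m p R} {V : Matrix p m R}
    (h : IsNilpotent (V * U)) : IsNilpotent (U * V) := by
  obtain ⟨k, hk⟩ := h
  exact ⟨k + 1, by rw [mul_pow_succ, hk, Matrix.mul_zero, Matrix.zero_mul]⟩

end Semiring

variable {F : Type*} [Field F]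

theorem exists_eq_mul_of_rank {m n : Type*} [Finite m] [Fintype n] [DecidableEq n]
    (A : Matrix m n F) :
    ∃ (U : Matrix m (Fin A.rank) F) (V : Matrix (Fin A.rank) n F), A = U * V := by
  let b : Module.Basis (Fin A.rank) F (LinearMap.range A.mulVecLin) :=
    Module.finBasisOfFinrankEq F _ rfl
  refine ⟨LinearMap.toMatrix b (Pi.basisFun F m) (LinearMap.range A.mulVecLin).subtype,
    LinearMap.toMatrix (Pi.basisFun F n) b A.mulVecLin.rangeRestrict, ?_⟩
  have hfactor : (LinearMap.range A.mulVecLin).subtype ∘ₗ A.mulVecLin.rangeRestrict =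
      A.mulVecLin := rfl
  rw [← LinearMap.toMatrix_comp, hfactor]
  exact (LinearMap.toMatrix'_toLin' A).symm

theorem rank_lt_card_of_det_eq_zero {n : Type*} [Fintype n] [DecidableEq n] {A : Matrix n n F}
    (hA : A.det = 0) : A.rank < Fintype.card n := by
  have hrange : LinearMap.range A.mulVecLin ≠ ⊤ := fun htop ↦ by
    have hunit : IsUnit A := mulVec_surjective_iff_isUnit.mp (LinearMap.range_eq_top.mp htop)
    exact (isUnit_iff_isUnit_det A).mp hunit |>.ne_zero hA
  simpa [rank] using Submodule.finrank_lt hrange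

end Matrix

/-- every non-nilpotent square matrix over a field is
algebraically strong shift equivalent to a nonsingular matrix. -/
theorem stmt_9 (F : Type*) [Field F] (n : ℕ)
    (A : Matrix (Fin n) (Fin n) F) (hA : ¬ IsNilpotent A) :
    ∃ (l p : ℕ) (B : Matrix (Fin p) (Fin p) F),
      B.det ≠ 0 ∧ AlgSSE F l ⟨n, A⟩ ⟨p, B⟩ := by
  induction n using Nat.strong_induction_on with
  | _ n ih =>
    by_cases hdet : A.det = 0
    · have hrank : A.rank < n := by simpa using Matrix.rank_lt_card_of_det_eq_zero hdet
      obtain ⟨U, V, hUV⟩ := A.exists_eq_mul_of_rank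
      rw [hUV] at hA
      obtain ⟨l, p, B, hB, hsse⟩ :=
        ih _ hrank (V * U) (mt Matrix.isNilpotent_mul_of_isNilpotent_mul_swap hA)
      exact ⟨l + 1, p, B, hB, AlgSSE.cons ⟨U, V, hUV, rfl⟩ hsse⟩
    · exact ⟨0, n, A, hdet, AlgSSE.refl F _⟩
end

section
/- Let D be a PID and let B_i, C_i be matrices over D[x] such that A = B₁C₁ and C_iB_i = B_{i+1}C_{i+1} are full rank (full column rank / full row rank) factorizations for all i. If C_l·B_l is nonsingular, then rank(A^{l+1}) = rank(A^l) = rank(C_l B_l). -/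
/-!
Ranks over a domain agree with ranks over its fraction field, where a matrix of full column rank
is injective and a matrix of full row rank stays of full rank after transposition; so multiplying
by either kind of factor preserves rank. Since `(B₀C₀)^(j+1) = B₀ (C₀B₀)^j C₀ = B₀ (B₁C₁)^j C₀`,
induction along the chain gives `rank A^j = mⱼ`, the inner dimension of the `j`-th factorization.
If `CₖBₖ = Bₖ₊₁Cₖ₊₁` is nonsingular, its rank `mₖ₊₁` is at most `rank Cₖ₊₁ = mₖ₊₂ ≤ mₖ₊₁`,
so the sequence of ranks of powers of `A` stabilises at `mₖ₊₁`.
-/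

namespace Matrix

theorem rank_map_algebraMap {R K : Type*} [CommRing R] [Field K] [Algebra R K]
    [IsFractionRing R K] {m n : Type*} [Fintype m] [Fintype n] (M : Matrix m n R) :
    (M.map (algebraMap R K)).rank = M.rank := by
  let φ : (m → R) →ₗ[R] (m → K) := .pi fun i ↦ Algebra.linearMap R K ∘ₗ .proj i
  have hcols : Set.range (M.map (algebraMap R K)).col = φ '' Set.range M.col := by
    rw [← Set.range_comp]; rfl
  rw [rank_eq_finrank_span_cols, rank_eq_finrank_span_cols, hcols,
    ← Submodule.localized'_span K (nonZeroDivisors R) φ]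
  exact (IsLocalizedModule.isBaseChange (nonZeroDivisors R) K
    ((Submodule.span R (Set.range M.col)).toLocalized' K (nonZeroDivisors R) φ)).finrank_eq

theorem mulVec_injective_of_rank_eq_card_width {K : Type*} [Field K] {m n : Type*}
    [Fintype n] (B : Matrix m n K) (h : B.rank = Fintype.card n) : Function.Injective B.mulVec := by
  have := B.mulVecLin.finrank_range_add_finrank_ker
  rw [← rank, h, Module.finrank_fintype_fun_eq_card, add_eq_left, Submodule.finrank_eq_zero] at this
  rw [← coe_mulVecLin, ← LinearMap.ker_eq_bot]
  exact this

theorem rank_mul_eq_right_of_rank_eq_card_width {R : Type*} [CommRing R] [IsDomain R]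
    {l m n : Type*} [Fintype l] [Fintype m] [Fintype n] (B : Matrix l m R) (N : Matrix m n R)
    (hB : B.rank = Fintype.card m) : (B * N).rank = N.rank := by
  rw [← rank_map_algebraMap (K := FractionRing R)] at hB ⊢
  rw [← rank_map_algebraMap (K := FractionRing R) N, Matrix.map_mul, rank, rank, mulVecLin_mul,
    LinearMap.range_comp, ← (Submodule.equivMapOfInjective _
      (mulVec_injective_of_rank_eq_card_width _ hB) _).finrank_eq]

theorem rank_mul_eq_left_of_rank_eq_card_height {R : Type*} [CommRing R] [IsDomain R]
    {l m n : Type*} [Fintype l] [Fintype m] [Fintype n] (N : Matrix l m R) (C : Matrix m n R)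
    (hC : C.rank = Fintype.card m) : (N * C).rank = N.rank := by
  rw [← rank_map_algebraMap (K := FractionRing R)] at hC ⊢
  rw [← rank_map_algebraMap (K := FractionRing R) N, Matrix.map_mul, ← rank_transpose,
    transpose_mul, rank_mul_eq_right_of_rank_eq_card_width _ _ (by rwa [rank_transpose]),
    rank_transpose]

theorem mul_pow_succ_s11 {m n α : Type*} [Fintype m] [DecidableEq m] [Fintype n] [DecidableEq n]
    [CommSemiring α] (B : Matrix m n α) (C : Matrix n m α) (j : ℕ) :
    (B * C) ^ (j + 1) = B * (C * B) ^ j * C := by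
  induction j with
  | zero => simp
  | succ j ih => rw [pow_succ, ih, pow_succ]; simp only [Matrix.mul_assoc]

end Matrix

open Matrix

theorem rank_mul_pow_eq_of_fullRankChain {R : Type*} [CommRing R] [IsDomain R] (m : ℕ → ℕ)
    (B : ∀ i : ℕ, Matrix (Fin (m i)) (Fin (m (i + 1))) R)
    (C : ∀ i : ℕ, Matrix (Fin (m (i + 1))) (Fin (m i)) R)
    (hchain : ∀ i, C i * B i = B (i + 1) * C (i + 1))
    (hB : ∀ i, (B i).rank = m (i + 1)) (hC : ∀ i, (C i).rank = m (i + 1)) (j : ℕ) :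
    ((B 0 * C 0) ^ j).rank = m j := by
  induction j generalizing m with
  | zero => simp
  | succ j ih =>
    rw [mul_pow_succ_s11, hchain 0,
      rank_mul_eq_left_of_rank_eq_card_height _ _ (by rw [hC, Fintype.card_fin]),
      rank_mul_eq_right_of_rank_eq_card_width _ _ (by rw [hB, Fintype.card_fin])]
    exact ih (fun i ↦ m (i + 1)) (fun i ↦ B (i + 1)) (fun i ↦ C (i + 1))
      (fun i ↦ hchain (i + 1)) (fun i ↦ hB (i + 1)) (fun i ↦ hC (i + 1))

theorem stmt_11_general (D : Type*) [CommRing D] [IsDomain D]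
    (m : ℕ → ℕ)
    (A : Matrix (Fin (m 0)) (Fin (m 0)) (Polynomial D))
    (B : ∀ i : ℕ, Matrix (Fin (m i)) (Fin (m (i + 1))) (Polynomial D))
    (C : ∀ i : ℕ, Matrix (Fin (m (i + 1))) (Fin (m i)) (Polynomial D))
    (hA : A = B 0 * C 0)
    (hchain : ∀ i, C i * B i = B (i + 1) * C (i + 1))
    (hBrank : ∀ i, (B i).rank = m (i + 1))
    (hCrank : ∀ i, (C i).rank = m (i + 1))
    (l : ℕ) (hl : 1 ≤ l)
    (hns : (C (l - 1) * B (l - 1)).det ≠ 0) :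
    (A ^ (l + 1)).rank = (A ^ l).rank ∧
    (A ^ l).rank = (C (l - 1) * B (l - 1)).rank := by
  obtain ⟨k, rfl⟩ : ∃ k, l = k + 1 := ⟨l - 1, by omega⟩
  change (C k * B k).det ≠ 0 at hns
  change _ ∧ _ = (C k * B k).rank
  have hpow : ∀ j, (A ^ j).rank = m j :=
    hA ▸ rank_mul_pow_eq_of_fullRankChain m B C hchain hBrank hCrank
  have hCB : (C k * B k).rank = m (k + 1) := by
    rw [rank_of_det_ne_zero hns, Fintype.card_fin]
  have hstable : m (k + 2) = m (k + 1) := by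
    refine le_antisymm ?_ ?_
    · exact hBrank (k + 1) ▸ rank_le_height (B (k + 1))
    · calc m (k + 1) = (B (k + 1) * C (k + 1)).rank := by rw [← hchain, hCB]
        _ ≤ (C (k + 1)).rank := rank_mul_le_right _ _
        _ = m (k + 2) := hCrank (k + 1)
  rw [hpow, hpow, hCB, hstable]
  exact ⟨rfl, rfl⟩

/-- for a chain of full rank factorizations
A = B₀C₀, CᵢBᵢ = B_{i+1}C_{i+1} (indexed from 0, so that Bᵢ, Cᵢ here are
the paper's B_{i+1}, C_{i+1}), if C_{l-1}·B_{l-1} is nonsingular (l ≥ 1,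
this is the paper's C_l B_l), then
rank(A^{l+1}) = rank(A^l) = rank(C_{l-1}B_{l-1}). -/
theorem stmt_11 (D : Type*) [CommRing D] [IsDomain D] [IsPrincipalIdealRing D]
    (m : ℕ → ℕ)
    (A : Matrix (Fin (m 0)) (Fin (m 0)) (Polynomial D))
    (B : ∀ i : ℕ, Matrix (Fin (m i)) (Fin (m (i + 1))) (Polynomial D))
    (C : ∀ i : ℕ, Matrix (Fin (m (i + 1))) (Fin (m i)) (Polynomial D))
    (hA : A = B 0 * C 0)
    (hchain : ∀ i, C i * B i = B (i + 1) * C (i + 1))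
    (hBrank : ∀ i, (B i).rank = m (i + 1))
    (hCrank : ∀ i, (C i).rank = m (i + 1))
    (l : ℕ) (hl : 1 ≤ l)
    (hns : (C (l - 1) * B (l - 1)).det ≠ 0) :
    (A ^ (l + 1)).rank = (A ^ l).rank ∧
    (A ^ l).rank = (C (l - 1) * B (l - 1)).rank :=
  stmt_11_general D m A B C hA hchain hBrank hCrank l hl hns
end

section
/- If square matrices A and B over a commutative ring R are algebraically shift equivalent of lag l, then det(I - t·A^l) = det(I - t·B^l) as polynomials in R[t]. -/
/-- Algebraic shift equivalence of lag `l`. -/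
def AlgSE (R : Type*) [CommRing R] {m n : ℕ} (l : ℕ)
    (A : Matrix (Fin m) (Fin m) R) (B : Matrix (Fin n) (Fin n) R) : Prop :=
  ∃ (U : Matrix (Fin m) (Fin n) R) (V : Matrix (Fin n) (Fin m) R),
    A * U = U * B ∧ V * A = B * V ∧ A ^ l = U * V ∧ B ^ l = V * U

/-- if A and B are algebraically shift equivalent of lag l,
then det(I - t·A^l) = det(I - t·B^l) in R[t]. -/
theorem stmt_14 (R : Type*) [CommRing R] {m n : ℕ}
    (A : Matrix (Fin m) (Fin m) R) (B : Matrix (Fin n) (Fin n) R)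
    (l : ℕ) (h : AlgSE R l A B) :
    ((1 : Matrix (Fin m) (Fin m) (Polynomial R)) -
        (Polynomial.X : Polynomial R) • (A ^ l).map Polynomial.C).det =
    ((1 : Matrix (Fin n) (Fin n) (Polynomial R)) -
        (Polynomial.X : Polynomial R) • (B ^ l).map Polynomial.C).det := by
  obtain ⟨U, V, _, _, hUV, hVU⟩ := h
  rw [hUV, hVU, Matrix.map_mul, Matrix.map_mul, ← Matrix.smul_mul,
    Matrix.det_one_sub_mul_comm, ← Matrix.mul_smul]
end
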